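/- arXiv:2312.05342 — 6 statements merged into one kernel-verified Lean document; each statement's English description precedes it below -/
import Mathlib

section
/- Fix integers p ≥ 1, m ≥ 1 and a real ν > 0. For any vectors v₁, …, v_m ∈ ℝ^p and any symmetric positive definite p×p real matrix Σ, the Euclidean norm of Σ_{t=1}^m v_t/(1 + v_tᵀΣ⁻¹v_t/ν) is at most (m/2)·√ν·√(λ_max(Σ)). -/
/-!
An outlier `x` enters with weight `c = (1 + q/ν)⁻¹`, where `q = xᵀΣ⁻¹x`. In the Loewner order
`Σ⁻¹ ≥ λ_max⁻¹ • 1`, so `‖x‖ ≤ √λ_max · √q`, and AM-GM (`2√q√ν ≤ ν + q`) gives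
`√q / (1 + q/ν) ≤ √ν / 2`. Hence each weighted outlier has norm at most `√ν √λ_max / 2`, and the
triangle inequality sums `m` of these.
-/

open Matrix

/-- The Euclidean norm on `ℝ^p` (as functions `Fin p → ℝ`). -/
noncomputable def euclNorm {p : ℕ} (v : Fin p → ℝ) : ℝ := Real.sqrt (∑ i, v i ^ 2)

open scoped MatrixOrder

lemma euclNorm_eq_norm {p : ℕ} (x : Fin p → ℝ) : euclNorm x = ‖WithLp.toLp 2 x‖ := by
  simp only [euclNorm, EuclideanSpace.norm_eq, Real.norm_eq_abs, sq_abs]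

lemma euclNorm_eq_sqrt_dotProduct {p : ℕ} (x : Fin p → ℝ) : euclNorm x = √(x ⬝ᵥ x) := by
  simp only [euclNorm, dotProduct, sq]

lemma euclNorm_sum_le {p m : ℕ} (x : Fin m → Fin p → ℝ) :
    euclNorm (∑ t, x t) ≤ ∑ t, euclNorm (x t) := by
  simpa only [euclNorm_eq_norm, WithLp.toLp_sum] using norm_sum_le _ _

lemma euclNorm_smul {p : ℕ} {c : ℝ} (hc : 0 ≤ c) (x : Fin p → ℝ) :
    euclNorm (c • x) = c * euclNorm x := by
  rw [euclNorm_eq_norm, euclNorm_eq_norm, WithLp.toLp_smul, norm_smul, Real.norm_of_nonneg hc]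

theorem Matrix.PosDef.inv_smul_one_le_inv {n : Type*} [Fintype n] [DecidableEq n]
    {S : Matrix n n ℝ} (hS : S.PosDef) {r : ℝ} (hr : ∀ i, hS.1.eigenvalues i ≤ r) :
    r⁻¹ • (1 : Matrix n n ℝ) ≤ S⁻¹ := by
  rw [← Algebra.algebraMap_eq_smul_one]
  refine algebraMap_le_of_le_spectrum (fun x hx => ?_) hS.inv.1.isSelfAdjoint
  rw [← hS.isUnit.unit_spec, ← coe_units_inv, ← spectrum.map_inv, Set.mem_inv,
    hS.isUnit.unit_spec, hS.1.spectrum_real_eq_range_eigenvalues] at hx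
  obtain ⟨i, hi⟩ := hx
  rw [← inv_inv x, ← hi]
  exact inv_anti₀ (hS.eigenvalues_pos i) (hr i)

theorem Matrix.PosDef.dotProduct_self_le_mul_dotProduct_inv_mulVec {n : Type*} [Fintype n]
    [DecidableEq n] {S : Matrix n n ℝ} (hS : S.PosDef) {r : ℝ} (hr : ∀ i, hS.1.eigenvalues i ≤ r)
    (hr₀ : 0 < r) (x : n → ℝ) :
    x ⬝ᵥ x ≤ r * (x ⬝ᵥ S⁻¹ *ᵥ x) := by
  have h := (le_iff.mp (hS.inv_smul_one_le_inv hr)).dotProduct_mulVec_nonneg x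
  simp only [star_trivial, sub_mulVec, smul_mulVec, one_mulVec, dotProduct_sub,
    dotProduct_smul, smul_eq_mul, sub_nonneg] at h
  rwa [inv_mul_le_iff₀ hr₀] at h

theorem sqrt_div_one_add_div_le {q ν : ℝ} (hq : 0 ≤ q) (hν : 0 < ν) :
    √q / (1 + q / ν) ≤ √ν / 2 := by
  rw [div_le_div_iff₀ (by positivity) two_pos]
  have hνq : √ν * (1 + q / ν) * √ν = ν + q := by
    rw [mul_right_comm, Real.mul_self_sqrt hν.le, mul_add, mul_div_cancel₀ _ hν.ne', mul_one]
  refine le_of_mul_le_mul_right ?_ (Real.sqrt_pos.mpr hν)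
  rw [hνq]
  nlinarith [sq_nonneg (√q - √ν), Real.sq_sqrt hq, Real.sq_sqrt hν.le]

theorem euclNorm_inv_one_add_div_smul_le {p : ℕ} {ν : ℝ} (hν : 0 < ν)
    {S : Matrix (Fin p) (Fin p) ℝ} (hS : S.PosDef) {r : ℝ} (hr : ∀ i, hS.1.eigenvalues i ≤ r)
    (hr₀ : 0 < r) (x : Fin p → ℝ) :
    euclNorm ((1 + (x ⬝ᵥ (S⁻¹ *ᵥ x)) / ν)⁻¹ • x) ≤ 1 / 2 * √ν * √r := by
  set q := x ⬝ᵥ (S⁻¹ *ᵥ x)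
  have hq : 0 ≤ q := by simpa using hS.inv.posSemidef.dotProduct_mulVec_nonneg x
  have hx : euclNorm x ≤ √r * √q := by
    rw [euclNorm_eq_sqrt_dotProduct, ← Real.sqrt_mul hr₀.le]
    exact Real.sqrt_le_sqrt (hS.dotProduct_self_le_mul_dotProduct_inv_mulVec hr hr₀ x)
  have hden : 0 < 1 + q / ν := by positivity
  calc euclNorm ((1 + q / ν)⁻¹ • x) = euclNorm x / (1 + q / ν) := by
        rw [euclNorm_smul (inv_nonneg.mpr hden.le), inv_mul_eq_div]
    _ ≤ √r * (√q / (1 + q / ν)) := by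
        rw [mul_div_assoc']; exact div_le_div_of_nonneg_right hx hden.le
    _ ≤ √r * (√ν / 2) := mul_le_mul_of_nonneg_left (sqrt_div_one_add_div_le hq hν) (by positivity)
    _ = 1 / 2 * √ν * √r := by ring

theorem outlier_location_contribution_bound_general {p m : ℕ} (hp : 1 ≤ p)
    {ν : ℝ} (hν : 0 < ν)
    (v : Fin m → Fin p → ℝ) (S : Matrix (Fin p) (Fin p) ℝ) (hS : S.PosDef) :
    euclNorm (∑ t, (1 + (v t ⬝ᵥ (S⁻¹ *ᵥ v t)) / ν)⁻¹ • v t)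
      ≤ ((m : ℝ) / 2) * Real.sqrt ν * Real.sqrt (⨆ i, hS.1.eigenvalues i) := by
  set L := ⨆ i, hS.1.eigenvalues i
  have hL : ∀ i, hS.1.eigenvalues i ≤ L := le_ciSup (Set.finite_range _).bddAbove
  have hL₀ : 0 < L := (hS.eigenvalues_pos ⟨0, hp⟩).trans_le (hL _)
  calc _ ≤ ∑ t, euclNorm ((1 + (v t ⬝ᵥ (S⁻¹ *ᵥ v t)) / ν)⁻¹ • v t) := euclNorm_sum_le _
    _ ≤ ∑ _t : Fin m, 1 / 2 * √ν * √L :=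
        Finset.sum_le_sum fun t _ => euclNorm_inv_one_add_div_smul_le hν hS hL hL₀ (v t)
    _ = (m / 2) * √ν * √L := by simp only [Finset.sum_const, Finset.card_fin, nsmul_eq_mul]; ring

/-- Worst-case bound on the total contribution of `m` arbitrary (adversarial) outliers
to the first-order condition of the robust location estimator: for any `v₁, …, v_m ∈ ℝ^p`
and symmetric positive definite `Σ`,
`‖Σₜ vₜ/(1 + vₜᵀΣ⁻¹vₜ/ν)‖ ≤ (m/2)·√ν·√(λ_max(Σ))`. -/
theorem outlier_location_contribution_bound {p m : ℕ} (hp : 1 ≤ p) (hm : 1 ≤ m)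
    {ν : ℝ} (hν : 0 < ν)
    (v : Fin m → Fin p → ℝ) (S : Matrix (Fin p) (Fin p) ℝ) (hS : S.PosDef) :
    euclNorm (∑ t, (1 + (v t ⬝ᵥ (S⁻¹ *ᵥ v t)) / ν)⁻¹ • v t)
      ≤ ((m : ℝ) / 2) * Real.sqrt ν * Real.sqrt (⨆ i, hS.1.eigenvalues i) :=
  outlier_location_contribution_bound_general hp hν v S hS
end

section
/- Fix integers p ≥ 1, m ≥ 1 and a real ν > 0. For any vectors v₁, …, v_m ∈ ℝ^p and any symmetric positive definite p×p real matrix Σ, the operator norm of the matrix Σ_{t=1}^m v_t v_tᵀ/(1 + v_tᵀΣ⁻¹v_t/ν) is at most m·ν·λ_max(Σ). -/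
/-!
The outlier `v` enters with weight `w = (1 + q/ν)⁻¹`, `q = vᵀΣ⁻¹v`, through the rank-one matrix
`vvᵀ` of operator norm `‖v‖²`. By the spectral theorem `λ_max(Σ) Σ⁻¹ - 1` is positive
semidefinite, i.e. `‖v‖² ≤ λ_max(Σ) q`, so `w‖v‖² ≤ λ_max(Σ) · q/(1 + q/ν) ≤ ν λ_max(Σ)`;
the triangle inequality adds up the `m` contributions.
-/

open Matrix

/-- The ℓ²-operator norm of a real square matrix. -/
noncomputable def matOpNorm {p : ℕ} (A : Matrix (Fin p) (Fin p) ℝ) : ℝ :=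
  ‖Matrix.toEuclideanCLM (𝕜 := ℝ) A‖

namespace Matrix

variable {𝕜 n : Type*} [RCLike 𝕜] [Fintype n] [DecidableEq n]

theorem toEuclideanCLM_vecMulVec (x y : n → 𝕜) :
    toEuclideanCLM (𝕜 := 𝕜) (vecMulVec x (star y)) =
      InnerProductSpace.rankOne 𝕜 (WithLp.toLp 2 x) (WithLp.toLp 2 y) := by
  apply ContinuousLinearMap.coe_injective
  rw [coe_toEuclideanCLM_eq_toEuclideanLin, ← InnerProductSpace.symm_toEuclideanLin_rankOne]
  exact toEuclideanLin.apply_symm_apply _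

theorem norm_toEuclideanCLM_vecMulVec (x y : n → 𝕜) :
    ‖toEuclideanCLM (𝕜 := 𝕜) (vecMulVec x (star y))‖ = ‖WithLp.toLp 2 x‖ * ‖WithLp.toLp 2 y‖ := by
  rw [toEuclideanCLM_vecMulVec, InnerProductSpace.norm_rankOne]

namespace PosDef

open scoped ComplexOrder

variable {S : Matrix n n 𝕜}

theorem spectral_theorem_inv (hS : S.PosDef) :
    S⁻¹ = (hS.1.eigenvectorUnitary : Matrix n n 𝕜) *
      diagonal (fun i ↦ ((hS.1.eigenvalues i)⁻¹ : 𝕜)) *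
        star (hS.1.eigenvectorUnitary : Matrix n n 𝕜) := by
  set U : Matrix n n 𝕜 := (hS.1.eigenvectorUnitary : Matrix n n 𝕜)
  have hUU : U * star U = 1 := mem_unitaryGroup_iff.mp hS.1.eigenvectorUnitary.2
  have hUU' : star U * U = 1 := mem_unitaryGroup_iff'.mp hS.1.eigenvectorUnitary.2
  have hunit : IsUnit (RCLike.ofReal ∘ hS.1.eigenvalues : n → 𝕜) :=
    Pi.isUnit_iff.2 fun i ↦ isUnit_iff_ne_zero.2 (by simp [(hS.eigenvalues_pos i).ne'])
  conv_lhs => rw [hS.1.spectral_theorem, Unitary.conjStarAlgAut_apply]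
  rw [Matrix.mul_inv_rev, Matrix.mul_inv_rev, inv_eq_left_inv hUU, inv_eq_left_inv hUU',
    inv_diagonal, Matrix.mul_assoc]
  congr 3
  funext i
  exact eq_inv_of_mul_eq_one_right (congrFun (Ring.mul_inverse_cancel _ hunit) i)

theorem posSemidef_smul_inv_sub_one (hS : S.PosDef) {c : ℝ} (hc : ∀ i, hS.1.eigenvalues i ≤ c) :
    ((c : 𝕜) • S⁻¹ - 1).PosSemidef := by
  set U : Matrix n n 𝕜 := (hS.1.eigenvectorUnitary : Matrix n n 𝕜)
  have hUU : U * star U = 1 := mem_unitaryGroup_iff.mp hS.1.eigenvectorUnitary.2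
  have hdiag : diagonal (fun i ↦ ((c / hS.1.eigenvalues i - 1 : ℝ) : 𝕜)) =
      (c : 𝕜) • diagonal (fun i ↦ ((hS.1.eigenvalues i)⁻¹ : 𝕜)) - 1 := by
    ext i j
    rcases eq_or_ne i j with rfl | hij
    · simp [div_eq_mul_inv, RCLike.real_smul_eq_coe_mul]
    · simp [diagonal_apply_ne _ hij, one_apply_ne hij]
  have hconj : (c : 𝕜) • S⁻¹ - 1 =
      U * diagonal (fun i ↦ ((c / hS.1.eigenvalues i - 1 : ℝ) : 𝕜)) * Uᴴ := by
    rw [hS.spectral_theorem_inv, ← star_eq_conjTranspose, ← hUU, hdiag, Matrix.mul_sub,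
      Matrix.sub_mul, Matrix.mul_one, Matrix.mul_smul, Matrix.smul_mul]
  rw [hconj]
  refine (posSemidef_diagonal_iff.2 fun i ↦ ?_).mul_mul_conjTranspose_same U
  rw [RCLike.ofReal_nonneg, sub_nonneg, one_le_div (hS.eigenvalues_pos i)]
  exact hc i

theorem re_dotProduct_self_le_iSup_eigenvalues_mul (hS : S.PosDef) (x : n → 𝕜) :
    RCLike.re (star x ⬝ᵥ x) ≤ (⨆ i, hS.1.eigenvalues i) * RCLike.re (star x ⬝ᵥ (S⁻¹ *ᵥ x)) := by
  have hle : ∀ i, hS.1.eigenvalues i ≤ ⨆ i, hS.1.eigenvalues i :=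
    le_ciSup (Set.finite_range _).bddAbove
  have := (hS.posSemidef_smul_inv_sub_one hle).re_dotProduct_nonneg x
  rwa [sub_mulVec, one_mulVec, smul_mulVec, dotProduct_sub, dotProduct_smul, map_sub,
    smul_eq_mul, RCLike.re_ofReal_mul, sub_nonneg] at this

end PosDef

end Matrix

theorem inv_one_add_div_mul_le {q ν : ℝ} (hν : 0 < ν) (hq : 0 ≤ q) : (1 + q / ν)⁻¹ * q ≤ ν := by
  rw [inv_mul_le_iff₀ (by positivity), add_mul, div_mul_cancel₀ _ hν.ne']
  linarith

theorem matOpNorm_sum_le {p : ℕ} {ι : Type*} (s : Finset ι) (A : ι → Matrix (Fin p) (Fin p) ℝ) :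
    matOpNorm (∑ t ∈ s, A t) ≤ ∑ t ∈ s, matOpNorm (A t) := by
  unfold matOpNorm
  rw [map_sum]
  exact norm_sum_le _ _

theorem matOpNorm_smul {p : ℕ} (c : ℝ) (A : Matrix (Fin p) (Fin p) ℝ) :
    matOpNorm (c • A) = |c| * matOpNorm A := by
  rw [matOpNorm, map_smul, norm_smul, Real.norm_eq_abs, matOpNorm]

theorem matOpNorm_vecMulVec_self {p : ℕ} (v : Fin p → ℝ) :
    matOpNorm (vecMulVec v v) = v ⬝ᵥ v := by
  have h := norm_toEuclideanCLM_vecMulVec v v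
  rw [star_trivial] at h
  rw [matOpNorm, h, ← real_inner_self_eq_norm_mul_norm, EuclideanSpace.inner_eq_star_dotProduct]
  simp

theorem matOpNorm_inv_one_add_smul_vecMulVec_le {p : ℕ} {ν : ℝ} (hν : 0 < ν)
    {S : Matrix (Fin p) (Fin p) ℝ} (hS : S.PosDef) (v : Fin p → ℝ) :
    matOpNorm ((1 + (v ⬝ᵥ (S⁻¹ *ᵥ v)) / ν)⁻¹ • vecMulVec v v)
      ≤ ν * ⨆ i, hS.1.eigenvalues i := by
  set q := v ⬝ᵥ (S⁻¹ *ᵥ v)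
  set lam := ⨆ i, hS.1.eigenvalues i
  have hq : 0 ≤ q := by simpa using hS.inv.posSemidef.dotProduct_mulVec_nonneg v
  have hlam : 0 ≤ lam := Real.iSup_nonneg fun i ↦ (hS.eigenvalues_pos i).le
  have hrayleigh : v ⬝ᵥ v ≤ lam * q := by
    simpa using hS.re_dotProduct_self_le_iSup_eigenvalues_mul v
  calc matOpNorm ((1 + q / ν)⁻¹ • vecMulVec v v) = (1 + q / ν)⁻¹ * (v ⬝ᵥ v) := by
        rw [matOpNorm_smul, matOpNorm_vecMulVec_self, abs_of_pos (by positivity)]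
    _ ≤ (1 + q / ν)⁻¹ * (lam * q) := by gcongr
    _ = lam * ((1 + q / ν)⁻¹ * q) := by ring
    _ ≤ lam * ν := by gcongr; exact inv_one_add_div_mul_le hν hq
    _ = ν * lam := mul_comm _ _

theorem outlier_scale_contribution_bound_general {p m : ℕ}
    {ν : ℝ} (hν : 0 < ν)
    (v : Fin m → Fin p → ℝ) (S : Matrix (Fin p) (Fin p) ℝ) (hS : S.PosDef) :
    matOpNorm (∑ t, (1 + (v t ⬝ᵥ (S⁻¹ *ᵥ v t)) / ν)⁻¹ • vecMulVec (v t) (v t))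
      ≤ (m : ℝ) * ν * (⨆ i, hS.1.eigenvalues i) := by
  calc _ ≤ ∑ t, matOpNorm ((1 + (v t ⬝ᵥ (S⁻¹ *ᵥ v t)) / ν)⁻¹ • vecMulVec (v t) (v t)) :=
        matOpNorm_sum_le _ _
    _ ≤ ∑ _t : Fin m, ν * ⨆ i, hS.1.eigenvalues i :=
        Finset.sum_le_sum fun t _ ↦ matOpNorm_inv_one_add_smul_vecMulVec_le hν hS (v t)
    _ = (m : ℝ) * ν * (⨆ i, hS.1.eigenvalues i) := by simp [mul_assoc]

/-- Worst-case bound on the total contribution of `m` arbitrary (adversarial) outliers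
to the first-order condition of the robust scale estimator: for any `v₁, …, v_m ∈ ℝ^p`
and symmetric positive definite `Σ`, the operator norm of
`Σₜ vₜvₜᵀ/(1 + vₜᵀΣ⁻¹vₜ/ν)` is at most `m·ν·λ_max(Σ)`. -/
theorem outlier_scale_contribution_bound {p m : ℕ} (hp : 1 ≤ p) (hm : 1 ≤ m)
    {ν : ℝ} (hν : 0 < ν)
    (v : Fin m → Fin p → ℝ) (S : Matrix (Fin p) (Fin p) ℝ) (hS : S.PosDef) :
    matOpNorm (∑ t, (1 + (v t ⬝ᵥ (S⁻¹ *ᵥ v t)) / ν)⁻¹ • vecMulVec (v t) (v t))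
      ≤ (m : ℝ) * ν * (⨆ i, hS.1.eigenvalues i) :=
  outlier_scale_contribution_bound_general hν v S hS
end

section
/- Let X be a real random variable with E[X²] < ∞ and let ν > 0. Then |E[X] − E[X/(1 + X²/ν)]| ≤ E[X²]/(2√ν). If moreover E[|X|³] < ∞, then also |E[X] − E[X/(1 + X²/ν)]| ≤ E[|X|³]/ν. -/
/-!
Pointwise, `z - f_ν(z) = z³/(ν + z²)`. Since `ν + z² ≥ 2√ν |z|` (AM–GM) and `ν + z² ≥ ν`, this
difference is bounded in absolute value both by `z²/(2√ν)` and by `|z|³/ν`; integrating these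
bounds gives the two estimates on the bias `E[X] - E[f_ν(X)]`.
-/

open MeasureTheory

section Pointwise

variable {ν : ℝ}

lemma sub_div_one_add_sq_div (hν : 0 < ν) (z : ℝ) :
    z - z / (1 + z ^ 2 / ν) = z ^ 3 / (ν + z ^ 2) := by
  have : 0 < ν + z ^ 2 := by positivity
  field_simp
  ring

lemma abs_div_one_add_sq_div_le (hν : 0 < ν) (z : ℝ) : |z / (1 + z ^ 2 / ν)| ≤ |z| := by
  rw [abs_div, abs_of_pos (by positivity : (0 : ℝ) < 1 + z ^ 2 / ν)]
  exact div_le_self (abs_nonneg z) (le_add_of_nonneg_right (by positivity))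

lemma abs_cube_div_add_sq_le_sq_div_sqrt (hν : 0 < ν) (z : ℝ) :
    |z ^ 3 / (ν + z ^ 2)| ≤ z ^ 2 / (2 * Real.sqrt ν) := by
  have hden : 0 < ν + z ^ 2 := by positivity
  have h_amgm : 2 * Real.sqrt ν * |z| ≤ ν + z ^ 2 := by
    nlinarith [sq_nonneg (Real.sqrt ν - |z|), Real.sq_sqrt hν.le, sq_abs z]
  rw [abs_div, abs_of_pos hden, div_le_div_iff₀ hden (by positivity), abs_pow, pow_succ, sq_abs]
  calc z ^ 2 * |z| * (2 * Real.sqrt ν) = z ^ 2 * (2 * Real.sqrt ν * |z|) := by ring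
    _ ≤ z ^ 2 * (ν + z ^ 2) := by gcongr

lemma abs_cube_div_add_sq_le_abs_cube_div (hν : 0 < ν) (z : ℝ) :
    |z ^ 3 / (ν + z ^ 2)| ≤ |z| ^ 3 / ν := by
  rw [abs_div, abs_of_pos (by positivity : 0 < ν + z ^ 2), abs_pow]
  gcongr
  exact le_add_of_nonneg_right (sq_nonneg z)

end Pointwise

lemma integral_sub_integral_div_one_add_sq_div {Ω : Type*} [MeasurableSpace Ω] {P : Measure Ω}
    {X : Ω → ℝ} (hX : Integrable X P) {ν : ℝ} (hν : 0 < ν) :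
    (∫ ω, X ω ∂P) - ∫ ω, X ω / (1 + X ω ^ 2 / ν) ∂P = ∫ ω, X ω ^ 3 / (ν + X ω ^ 2) ∂P := by
  have hf : Integrable (fun ω => X ω / (1 + X ω ^ 2 / ν)) P := by
    refine hX.mono ?_ (ae_of_all _ fun ω => ?_)
    · have : Continuous fun z : ℝ => z / (1 + z ^ 2 / ν) :=
        continuous_id.div (by fun_prop) fun z => by positivity
      exact this.comp_aestronglyMeasurable hX.aestronglyMeasurable
    · simpa only [Real.norm_eq_abs] using abs_div_one_add_sq_div_le hν (X ω)
  rw [← integral_sub hX hf]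
  simp only [sub_div_one_add_sq_div hν]

/-- Bias bound for the robust location estimand: if `E[X²] < ∞` then
`|E[X] − E[X/(1 + X²/ν)]| ≤ E[X²]/(2√ν)`, and if moreover `E[|X|³] < ∞` then
`|E[X] − E[X/(1 + X²/ν)]| ≤ E[|X|³]/ν`. -/
theorem robust_location_bias_bound {Ω : Type*} [MeasurableSpace Ω]
    (P : Measure Ω) [IsProbabilityMeasure P]
    {X : Ω → ℝ} (hXmeas : Measurable X)
    (hX2 : Integrable (fun ω => (X ω) ^ 2) P) {ν : ℝ} (hν : 0 < ν) :
    |(∫ ω, X ω ∂P) - ∫ ω, X ω / (1 + (X ω) ^ 2 / ν) ∂P|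
        ≤ (∫ ω, (X ω) ^ 2 ∂P) / (2 * Real.sqrt ν) ∧
    (Integrable (fun ω => |X ω| ^ 3) P →
      |(∫ ω, X ω ∂P) - ∫ ω, X ω / (1 + (X ω) ^ 2 / ν) ∂P|
        ≤ (∫ ω, |X ω| ^ 3 ∂P) / ν) := by
  have hX : Integrable X P :=
    ((memLp_two_iff_integrable_sq hXmeas.aestronglyMeasurable).2 hX2).integrable one_le_two
  rw [integral_sub_integral_div_one_add_sq_div hX hν, ← integral_div, ← Real.norm_eq_abs]
  refine ⟨?_, fun hX3 => ?_⟩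
  · exact norm_integral_le_of_norm_le (hX2.div_const _)
      (ae_of_all _ fun ω => abs_cube_div_add_sq_le_sq_div_sqrt hν (X ω))
  · rw [← integral_div]
    exact norm_integral_le_of_norm_le (hX3.div_const _)
      (ae_of_all _ fun ω => abs_cube_div_add_sq_le_abs_cube_div hν (X ω))
end

section
/- Let X be an integrable real random variable and ν > 0. Then X⁵/((1 + X²/ν)(1 + 2X²/ν)) is integrable (bounded in absolute value by (ν²/2)·|X|), and the Richardson-extrapolated estimand satisfies 2·E[X/(1 + X²/ν)] − E[X/(1 + 2X²/ν)] = E[X] − (2/ν²)·E[X⁵/((1 + X²/ν)(1 + 2X²/ν))]. -/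
open MeasureTheory

lemma rb_denom1_pos {ν z : ℝ} (hν : 0 < ν) : 0 < 1 + z ^ 2 / ν := by positivity

lemma rb_denom2_pos {ν z : ℝ} (hν : 0 < ν) : 0 < 1 + 2 * z ^ 2 / ν := by positivity

lemma rb_bound {ν : ℝ} (hν : 0 < ν) (z : ℝ) :
    |z ^ 5 / ((1 + z ^ 2 / ν) * (1 + 2 * z ^ 2 / ν))| ≤ (ν ^ 2 / 2) * |z| := by
  have h1 := rb_denom1_pos (z := z) hν
  have h2 := rb_denom2_pos (z := z) hν
  have hab : 0 < (1 + z ^ 2 / ν) * (1 + 2 * z ^ 2 / ν) := mul_pos h1 h2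
  rw [abs_div, abs_of_pos hab, div_le_iff₀ hab]
  have hz5 : |z ^ 5| = |z| * z ^ 4 := by
    have : z ^ 5 = z * z ^ 4 := by ring
    rw [this, abs_mul, abs_of_nonneg (by positivity : (0:ℝ) ≤ z ^ 4)]
  rw [hz5]
  have hkey : z ^ 4 ≤ ν ^ 2 / 2 * ((1 + z ^ 2 / ν) * (1 + 2 * z ^ 2 / ν)) := by
    have hne : ν ≠ 0 := ne_of_gt hν
    rw [div_mul_eq_mul_div, le_div_iff₀ (by norm_num : (0:ℝ) < 2)]
    have expand : ν ^ 2 * ((1 + z ^ 2 / ν) * (1 + 2 * z ^ 2 / ν))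
        = ν ^ 2 + 3 * ν * z ^ 2 + 2 * z ^ 4 := by field_simp; ring
    rw [expand]; nlinarith [sq_nonneg ν, mul_nonneg hν.le (sq_nonneg z)]
  calc |z| * z ^ 4 ≤ |z| * (ν ^ 2 / 2 * ((1 + z ^ 2 / ν) * (1 + 2 * z ^ 2 / ν))) :=
        mul_le_mul_of_nonneg_left hkey (abs_nonneg z)
    _ = ν ^ 2 / 2 * |z| * ((1 + z ^ 2 / ν) * (1 + 2 * z ^ 2 / ν)) := by ring

lemma rb_pointwise {ν : ℝ} (hν : 0 < ν) (z : ℝ) :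
    2 * (z / (1 + z ^ 2 / ν)) - z / (1 + 2 * z ^ 2 / ν)
      = z - (2 / ν ^ 2) * (z ^ 5 / ((1 + z ^ 2 / ν) * (1 + 2 * z ^ 2 / ν))) := by
  have h1 := (rb_denom1_pos (z := z) hν).ne'
  have h2 := (rb_denom2_pos (z := z) hν).ne'
  have hne : ν ≠ 0 := ne_of_gt hν
  field_simp
  ring

/-- Richardson extrapolation identity: for integrable `X` and `ν > 0`, the variable
`X⁵/((1 + X²/ν)(1 + 2X²/ν))` is integrable (bounded in absolute value by `(ν²/2)·|X|`),
and `2·E[X/(1 + X²/ν)] − E[X/(1 + 2X²/ν)] = E[X] − (2/ν²)·E[X⁵/((1 + X²/ν)(1 + 2X²/ν))]`. -/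
theorem richardson_bias_identity {Ω : Type*} [MeasurableSpace Ω]
    (P : Measure Ω) [IsProbabilityMeasure P]
    {X : Ω → ℝ} (hX : Integrable X P) {ν : ℝ} (hν : 0 < ν) :
    Integrable (fun ω => (X ω) ^ 5 / ((1 + (X ω) ^ 2 / ν) * (1 + 2 * (X ω) ^ 2 / ν))) P ∧
    (∀ ω, |(X ω) ^ 5 / ((1 + (X ω) ^ 2 / ν) * (1 + 2 * (X ω) ^ 2 / ν))|
        ≤ (ν ^ 2 / 2) * |X ω|) ∧
    2 * (∫ ω, X ω / (1 + (X ω) ^ 2 / ν) ∂P) - (∫ ω, X ω / (1 + 2 * (X ω) ^ 2 / ν) ∂P)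
      = (∫ ω, X ω ∂P)
        - (2 / ν ^ 2) * ∫ ω, (X ω) ^ 5 / ((1 + (X ω) ^ 2 / ν) * (1 + 2 * (X ω) ^ 2 / ν)) ∂P := by
  have hXm := hX.aestronglyMeasurable
  -- continuity of the maps
  have hc1 : Continuous fun z : ℝ => z / (1 + z ^ 2 / ν) :=
    Continuous.div continuous_id (by continuity) fun z => (rb_denom1_pos hν).ne'
  have hc2 : Continuous fun z : ℝ => z / (1 + 2 * z ^ 2 / ν) :=
    Continuous.div continuous_id (by continuity) fun z => (rb_denom2_pos hν).ne'
  have hc5 : Continuous fun z : ℝ => z ^ 5 / ((1 + z ^ 2 / ν) * (1 + 2 * z ^ 2 / ν)) :=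
    Continuous.div (by continuity) (by continuity)
      fun z => (mul_pos (rb_denom1_pos hν) (rb_denom2_pos hν)).ne'
  have hint5 : Integrable
      (fun ω => (X ω) ^ 5 / ((1 + (X ω) ^ 2 / ν) * (1 + 2 * (X ω) ^ 2 / ν))) P := by
    refine (Integrable.const_mul hX.abs (ν ^ 2 / 2)).mono
      (hc5.comp_aestronglyMeasurable hXm) ?_
    filter_upwards with ω
    calc ‖(X ω) ^ 5 / ((1 + (X ω) ^ 2 / ν) * (1 + 2 * (X ω) ^ 2 / ν))‖
        ≤ ν ^ 2 / 2 * |X ω| := rb_bound hν (X ω)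
      _ ≤ ‖ν ^ 2 / 2 * |X ω|‖ := le_abs_self _
  have hint1 : Integrable (fun ω => X ω / (1 + (X ω) ^ 2 / ν)) P := by
    refine hX.mono (hc1.comp_aestronglyMeasurable hXm) ?_
    filter_upwards with ω
    have h1 := rb_denom1_pos (z := X ω) hν
    rw [Real.norm_eq_abs, Real.norm_eq_abs, abs_div, abs_of_pos h1]
    exact div_le_self (abs_nonneg _) (by nlinarith [div_nonneg (sq_nonneg (X ω)) hν.le])
  have hint2 : Integrable (fun ω => X ω / (1 + 2 * (X ω) ^ 2 / ν)) P := by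
    refine hX.mono (hc2.comp_aestronglyMeasurable hXm) ?_
    filter_upwards with ω
    have h2 := rb_denom2_pos (z := X ω) hν
    rw [Real.norm_eq_abs, Real.norm_eq_abs, abs_div, abs_of_pos h2]
    exact div_le_self (abs_nonneg _) (by nlinarith [div_nonneg (mul_nonneg (by norm_num : (0:ℝ) ≤ 2) (sq_nonneg (X ω))) hν.le])
  refine ⟨hint5, fun ω => rb_bound hν (X ω), ?_⟩
  have key : ∫ ω, (2 * (X ω / (1 + (X ω) ^ 2 / ν)) - X ω / (1 + 2 * (X ω) ^ 2 / ν)) ∂P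
      = ∫ ω, (X ω - (2 / ν ^ 2) * ((X ω) ^ 5 / ((1 + (X ω) ^ 2 / ν) * (1 + 2 * (X ω) ^ 2 / ν)))) ∂P := by
    exact integral_congr_ae (Filter.Eventually.of_forall fun ω => rb_pointwise hν (X ω))
  rw [integral_sub (hint1.const_mul 2) hint2, integral_const_mul 2] at key
  rw [integral_sub hX (hint5.const_mul _), integral_const_mul] at key
  exact key
end

section
/- Let X be a real random variable and ν > 0. If E[X⁴] < ∞, then |2·E[X/(1 + X²/ν)] − E[X/(1 + 2X²/ν)] − E[X]| ≤ E[X⁴]/ν^{3/2}. If E[|X|⁵] < ∞, then |2·E[X/(1 + X²/ν)] − E[X/(1 + 2X²/ν)] − E[X]| ≤ 2·E[|X|⁵]/ν². -/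
/-!
The Richardson error is an explicit rational function:
`2 f_ν(x) − f_{ν/2}(x) − x = −2x⁵ / ((ν + x²)(ν + 2x²))`.
Its denominator is at least `ν²`, and by AM-GM (`ν + x² ≥ 2|x|√ν`) at least `2|x|ν^{3/2}`;
this gives the two pointwise bounds, which are then integrated. Integrability of `f_ν(X)` comes
from `|f_ν(x)| ≤ |x|`.
-/

open MeasureTheory

/-- `2 f_ν(x) − f_{ν/2}(x) − x`, with `f_{ν/2}(x) = x / (1 + 2x²/ν)`. -/
noncomputable def richardsonError (ν x : ℝ) : ℝ :=
  2 * (x / (1 + x ^ 2 / ν)) - x / (1 + 2 * x ^ 2 / ν) - x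

section Pointwise

variable {ν : ℝ} (x : ℝ)

theorem richardsonError_eq (hν : 0 < ν) :
    richardsonError ν x = -(2 * x ^ 5) / ((ν + x ^ 2) * (ν + 2 * x ^ 2)) := by
  have h₁ : 1 + x ^ 2 / ν ≠ 0 := by positivity
  have h₂ : 1 + 2 * x ^ 2 / ν ≠ 0 := by positivity
  rw [richardsonError]
  field_simp
  ring

theorem abs_richardsonError_eq (hν : 0 < ν) :
    |richardsonError ν x| = 2 * |x| ^ 5 / ((ν + x ^ 2) * (ν + 2 * x ^ 2)) := by
  rw [richardsonError_eq x hν, abs_div,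
    abs_of_pos (by positivity : 0 < (ν + x ^ 2) * (ν + 2 * x ^ 2)), abs_neg, abs_mul, abs_pow,
    abs_two]

theorem two_mul_abs_mul_rpow_le (hν : 0 < ν) :
    2 * |x| * ν ^ ((3 : ℝ) / 2) ≤ (ν + x ^ 2) * (ν + 2 * x ^ 2) := by
  have h_rpow : ν ^ ((3 : ℝ) / 2) = √ν * ν := by
    rw [show (3 : ℝ) / 2 = 1 / 2 + 1 by norm_num, Real.rpow_add hν, Real.rpow_one,
      Real.sqrt_eq_rpow]
  have h_amgm : 2 * |x| * √ν ≤ ν + x ^ 2 := by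
    simpa [Real.sq_sqrt hν.le, mul_right_comm, add_comm] using two_mul_le_add_sq |x| √ν
  calc 2 * |x| * ν ^ ((3 : ℝ) / 2) = 2 * |x| * √ν * ν := by rw [h_rpow]; ring
    _ ≤ (ν + x ^ 2) * (ν + 2 * x ^ 2) :=
      mul_le_mul h_amgm (by nlinarith [sq_nonneg x]) hν.le (by positivity)

theorem abs_richardsonError_le_pow_four (hν : 0 < ν) :
    |richardsonError ν x| ≤ x ^ 4 / ν ^ ((3 : ℝ) / 2) := by
  rw [abs_richardsonError_eq x hν, div_le_div_iff₀ (by positivity) (by positivity),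
    ← (by norm_num : Even 4).pow_abs]
  calc 2 * |x| ^ 5 * ν ^ ((3 : ℝ) / 2) = |x| ^ 4 * (2 * |x| * ν ^ ((3 : ℝ) / 2)) := by ring
    _ ≤ |x| ^ 4 * ((ν + x ^ 2) * (ν + 2 * x ^ 2)) :=
      mul_le_mul_of_nonneg_left (two_mul_abs_mul_rpow_le x hν) (by positivity)

theorem abs_richardsonError_le_abs_pow_five (hν : 0 < ν) :
    |richardsonError ν x| ≤ 2 * |x| ^ 5 / ν ^ 2 := by
  rw [abs_richardsonError_eq x hν]
  gcongr
  nlinarith [sq_nonneg x]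

end Pointwise

section Integral

variable {Ω : Type*} [MeasurableSpace Ω] {P : Measure Ω} {X : Ω → ℝ}

theorem MeasureTheory.Integrable.of_integrable_abs_pow [IsFiniteMeasure P]
    (hX : AEStronglyMeasurable X P) {n : ℕ} (hn : 1 ≤ n)
    (h : Integrable (fun ω => |X ω| ^ n) P) : Integrable X P := by
  have h_norm := integrable_norm_rpow_of_le hX zero_le_one (Nat.cast_nonneg n)
    (by exact_mod_cast hn) (by simpa [Real.norm_eq_abs, Real.rpow_natCast] using h)
  exact (integrable_norm_iff hX).1 (by simpa using h_norm)

theorem MeasureTheory.Integrable.div_one_add_of_nonneg (hX : Integrable X P)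
    (hX_meas : Measurable X) {T : Ω → ℝ} (hT : Measurable T) (hT_nonneg : ∀ ω, 0 ≤ T ω) :
    Integrable (fun ω => X ω / (1 + T ω)) P := by
  refine hX.mono (hX_meas.div (measurable_const.add hT)).aestronglyMeasurable
    (ae_of_all _ fun ω => ?_)
  rw [norm_div]
  refine div_le_self (norm_nonneg _) ?_
  rw [Real.norm_of_nonneg (by linarith [hT_nonneg ω])]
  linarith [hT_nonneg ω]

theorem integral_richardsonError (hX : Integrable X P) (hX_meas : Measurable X) {ν : ℝ}
    (hν : 0 ≤ ν) :
    ∫ ω, richardsonError ν (X ω) ∂P =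
      2 * (∫ ω, X ω / (1 + (X ω) ^ 2 / ν) ∂P)
        - (∫ ω, X ω / (1 + 2 * (X ω) ^ 2 / ν) ∂P) - ∫ ω, X ω ∂P := by
  have h₁ : Integrable (fun ω => X ω / (1 + (X ω) ^ 2 / ν)) P :=
    hX.div_one_add_of_nonneg hX_meas (by fun_prop) fun ω => by positivity
  have h₂ : Integrable (fun ω => X ω / (1 + 2 * (X ω) ^ 2 / ν)) P :=
    hX.div_one_add_of_nonneg hX_meas (by fun_prop) fun ω => by positivity
  simp only [richardsonError]
  rw [integral_sub _ hX, integral_sub (h₁.const_mul 2) h₂, integral_const_mul]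
  exact (h₁.const_mul 2).sub h₂

theorem abs_richardson_bias_le_integral (hX : Integrable X P) (hX_meas : Measurable X) {ν : ℝ}
    (hν : 0 ≤ ν) {B : Ω → ℝ} (hB : Integrable B P)
    (h_le : ∀ ω, |richardsonError ν (X ω)| ≤ B ω) :
    |2 * (∫ ω, X ω / (1 + (X ω) ^ 2 / ν) ∂P)
        - (∫ ω, X ω / (1 + 2 * (X ω) ^ 2 / ν) ∂P) - ∫ ω, X ω ∂P|
      ≤ ∫ ω, B ω ∂P := by
  rw [← integral_richardsonError hX hX_meas hν]
  exact norm_integral_le_of_norm_le (f := fun ω => richardsonError ν (X ω)) hB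
    (ae_of_all _ h_le)

end Integral

/-- Bias bounds for the Richardson-extrapolated robust location estimand:
if `E[X⁴] < ∞` then `|2·E[X/(1+X²/ν)] − E[X/(1+2X²/ν)] − E[X]| ≤ E[X⁴]/ν^{3/2}`;
if `E[|X|⁵] < ∞` then `|2·E[X/(1+X²/ν)] − E[X/(1+2X²/ν)] − E[X]| ≤ 2·E[|X|⁵]/ν²`. -/
theorem richardson_bias_bound {Ω : Type*} [MeasurableSpace Ω]
    (P : Measure Ω) [IsProbabilityMeasure P]
    {X : Ω → ℝ} (hXmeas : Measurable X) {ν : ℝ} (hν : 0 < ν) :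
    (Integrable (fun ω => (X ω) ^ 4) P →
      |2 * (∫ ω, X ω / (1 + (X ω) ^ 2 / ν) ∂P)
          - (∫ ω, X ω / (1 + 2 * (X ω) ^ 2 / ν) ∂P) - ∫ ω, X ω ∂P|
        ≤ (∫ ω, (X ω) ^ 4 ∂P) / ν ^ ((3 : ℝ) / 2)) ∧
    (Integrable (fun ω => |X ω| ^ 5) P →
      |2 * (∫ ω, X ω / (1 + (X ω) ^ 2 / ν) ∂P)
          - (∫ ω, X ω / (1 + 2 * (X ω) ^ 2 / ν) ∂P) - ∫ ω, X ω ∂P|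
        ≤ 2 * (∫ ω, |X ω| ^ 5 ∂P) / ν ^ 2) := by
  constructor
  · intro h₄
    have hX : Integrable X P := .of_integrable_abs_pow hXmeas.aestronglyMeasurable
      (n := 4) (by norm_num) (by simpa only [(by norm_num : Even 4).pow_abs] using h₄)
    simpa only [integral_div] using
      abs_richardson_bias_le_integral hX hXmeas hν.le (h₄.div_const _)
        fun ω => abs_richardsonError_le_pow_four (X ω) hν
  · intro h₅
    have hX : Integrable X P :=
      .of_integrable_abs_pow hXmeas.aestronglyMeasurable (by norm_num) h₅
    simpa only [integral_div, integral_const_mul] using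
      abs_richardson_bias_le_integral hX hXmeas hν.le ((h₅.const_mul 2).div_const _)
        fun ω => abs_richardsonError_le_abs_pow_five (X ω) hν
end

section
/- Let X be an integrable real random variable and ν > 0, and set μ̃(ν) = 2·E[X/(1 + X²/ν)] − E[X/(1 + 2X²/ν)]. Then the random variable X⁵(1 − 2X²/ν)/((1 + X²/ν)(1 + 2X²/ν)(1 + 4X²/ν)) is integrable, and 2μ̃(ν) − μ̃(ν/2) = E[X] + (4/ν²)·E[X⁵(1 − 2X²/ν)/((1 + X²/ν)(1 + 2X²/ν)(1 + 4X²/ν))]. -/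
/-!
Each corrected estimand is a fixed linear combination of `E[f_{ν/k}(X)]` for `k = 1, 2, 4`, and
pointwise `4 f_ν(x) - 4 f_{ν/2}(x) + f_{ν/4}(x) - x` equals `(4/ν²)` times the remainder
`x⁵(1 - 2x²/ν)/((1 + x²/ν)(1 + 2x²/ν)(1 + 4x²/ν))`, so both sides agree after taking expectations.
Since `|f_ν(x)| ≤ |x|`, every term is integrable as soon as `X` is.
-/

open MeasureTheory

lemma abs_div_one_add_le_abs (x : ℝ) {t : ℝ} (ht : 0 ≤ t) : |x / (1 + t)| ≤ |x| := by
  rw [abs_div, abs_of_pos (show 0 < 1 + t by linarith)]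
  exact div_le_self (abs_nonneg x) (by linarith)

lemma MeasureTheory.Integrable.div_one_add_nonneg {Ω : Type*} [MeasurableSpace Ω] {P : Measure Ω}
    {X g : Ω → ℝ} (hX : Integrable X P) (hg : AEStronglyMeasurable g P) (hg0 : 0 ≤ g) :
    Integrable (fun ω => X ω / (1 + g ω)) P :=
  hX.mono (hX.1.div₀ (aestronglyMeasurable_const.add hg))
    (Filter.Eventually.of_forall fun ω => abs_div_one_add_le_abs (X ω) (hg0 ω))

lemma MeasureTheory.Integrable.div_one_add_mul_sq_div {Ω : Type*} [MeasurableSpace Ω] {P : Measure Ω}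
    {X : Ω → ℝ} (hX : Integrable X P) {k ν : ℝ} (hk : 0 ≤ k) (hν : 0 ≤ ν) :
    Integrable (fun ω => X ω / (1 + k * X ω ^ 2 / ν)) P :=
  hX.div_one_add_nonneg (by fun_prop) fun ω => by positivity

lemma richardson_remainder_eq {ν : ℝ} (hν : 0 < ν) (x : ℝ) :
    x ^ 5 * (1 - 2 * x ^ 2 / ν) / ((1 + x ^ 2 / ν) * (1 + 2 * x ^ 2 / ν) * (1 + 4 * x ^ 2 / ν))
      = ν ^ 2 / 4 * (4 * (x / (1 + x ^ 2 / ν)) - 4 * (x / (1 + 2 * x ^ 2 / ν))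
          + x / (1 + 4 * x ^ 2 / ν) - x) := by
  have h1 : 1 + x ^ 2 / ν ≠ 0 := by positivity
  have h2 : 1 + 2 * x ^ 2 / ν ≠ 0 := by positivity
  have h4 : 1 + 4 * x ^ 2 / ν ≠ 0 := by positivity
  field_simp
  ring

theorem repeated_richardson_identity_general {Ω : Type*} [MeasurableSpace Ω]
    (P : Measure Ω)
    {X : Ω → ℝ} (hX : Integrable X P) {ν : ℝ} (hν : 0 < ν) :
    Integrable (fun ω => (X ω) ^ 5 * (1 - 2 * (X ω) ^ 2 / ν) /
      ((1 + (X ω) ^ 2 / ν) * (1 + 2 * (X ω) ^ 2 / ν) * (1 + 4 * (X ω) ^ 2 / ν))) P ∧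
    2 * (2 * (∫ ω, X ω / (1 + (X ω) ^ 2 / ν) ∂P)
          - (∫ ω, X ω / (1 + 2 * (X ω) ^ 2 / ν) ∂P))
      - (2 * (∫ ω, X ω / (1 + 2 * (X ω) ^ 2 / ν) ∂P)
          - (∫ ω, X ω / (1 + 4 * (X ω) ^ 2 / ν) ∂P))
      = (∫ ω, X ω ∂P)
        + (4 / ν ^ 2) * ∫ ω, (X ω) ^ 5 * (1 - 2 * (X ω) ^ 2 / ν) /
            ((1 + (X ω) ^ 2 / ν) * (1 + 2 * (X ω) ^ 2 / ν) * (1 + 4 * (X ω) ^ 2 / ν)) ∂P := by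
  have h1 : Integrable (fun ω => X ω / (1 + X ω ^ 2 / ν)) P := by
    simpa using hX.div_one_add_mul_sq_div zero_le_one hν.le
  have h2 := hX.div_one_add_mul_sq_div zero_le_two hν.le
  have h4 := hX.div_one_add_mul_sq_div zero_le_four hν.le
  have h12 : Integrable (fun ω => 4 * (X ω / (1 + X ω ^ 2 / ν))
      - 4 * (X ω / (1 + 2 * X ω ^ 2 / ν))) P := (h1.const_mul 4).sub (h2.const_mul 4)
  have h124 : Integrable (fun ω => 4 * (X ω / (1 + X ω ^ 2 / ν))
      - 4 * (X ω / (1 + 2 * X ω ^ 2 / ν)) + X ω / (1 + 4 * X ω ^ 2 / ν)) P := h12.add h4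
  rw [funext fun ω => richardson_remainder_eq hν (X ω)]
  refine ⟨(h124.sub hX).const_mul _, ?_⟩
  rw [integral_const_mul, integral_sub h124 hX, integral_add h12 h4,
    integral_sub (h1.const_mul 4) (h2.const_mul 4), integral_const_mul, integral_const_mul, ← mul_assoc,
    div_mul_div_cancel₀ (by positivity), div_self four_ne_zero]
  ring

/-- Repeated Richardson correction identity: for integrable `X` and `ν > 0`, setting
`μ̃(ν) = 2·E[X/(1 + X²/ν)] − E[X/(1 + 2X²/ν)]`, the variable
`X⁵(1 − 2X²/ν)/((1 + X²/ν)(1 + 2X²/ν)(1 + 4X²/ν))` is integrable and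
`2μ̃(ν) − μ̃(ν/2) = E[X] + (4/ν²)·E[X⁵(1 − 2X²/ν)/((1 + X²/ν)(1 + 2X²/ν)(1 + 4X²/ν))]`.
(Note `μ̃(ν/2) = 2·E[X/(1 + 2X²/ν)] − E[X/(1 + 4X²/ν)]`.) -/
theorem repeated_richardson_identity {Ω : Type*} [MeasurableSpace Ω]
    (P : Measure Ω) [IsProbabilityMeasure P]
    {X : Ω → ℝ} (hX : Integrable X P) {ν : ℝ} (hν : 0 < ν) :
    Integrable (fun ω => (X ω) ^ 5 * (1 - 2 * (X ω) ^ 2 / ν) /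
      ((1 + (X ω) ^ 2 / ν) * (1 + 2 * (X ω) ^ 2 / ν) * (1 + 4 * (X ω) ^ 2 / ν))) P ∧
    2 * (2 * (∫ ω, X ω / (1 + (X ω) ^ 2 / ν) ∂P)
          - (∫ ω, X ω / (1 + 2 * (X ω) ^ 2 / ν) ∂P))
      - (2 * (∫ ω, X ω / (1 + 2 * (X ω) ^ 2 / ν) ∂P)
          - (∫ ω, X ω / (1 + 4 * (X ω) ^ 2 / ν) ∂P))
      = (∫ ω, X ω ∂P)
        + (4 / ν ^ 2) * ∫ ω, (X ω) ^ 5 * (1 - 2 * (X ω) ^ 2 / ν) /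
            ((1 + (X ω) ^ 2 / ν) * (1 + 2 * (X ω) ^ 2 / ν) * (1 + 4 * (X ω) ^ 2 / ν)) ∂P :=
  repeated_richardson_identity_general P hX hν
end
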